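/- arXiv:1806.05270 — 2 statements merged into one kernel-verified Lean document; each statement's English description precedes it below -/
import Mathlib

section
/- Let T be a closed, densely defined linear operator in ℱ²_d such that (i) for each j, R_j Dom(T) ⊆ Dom(T) and T R_j F = R_j T F for all F ∈ Dom(T), and (ii) whenever F ∈ Dom(T) has ⟨F, ξ_∅⟩ = 0, then R_j*F ∈ Dom(T) for each j. Let G(T) = {F ⊕ TF : F ∈ Dom(T)} be its graph and let 𝒲 = G(T) ⊖ closure(span ∪_j (R_j ⊕ R_j)G(T)) be the wandering subspace of the restriction of R ⊕ R to G(T). Then 𝒲 is one-dimensional; it is spanned by the nonzero vector Q*ξ_∅, where Q : G(T) → ℱ²_d is the contraction Q(F ⊕ TF) = F. -/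
/-!
The functional `p ↦ (p.1)_∅` is bounded on the closed graph `G`, so it is represented by a
vector `w = Q*ξ_∅ ∈ G`, which is nonzero because `Dom(T)` is dense. The functional vanishes on
`(R_j ⊕ R_j)G`, so `w` is wandering. Conversely, locality writes every `p ∈ G` with `(p.1)_∅ = 0`
as `∑ⱼ (R_j ⊕ R_j)(R_j* p.1 ⊕ T R_j* p.1)`, since a graph vector is determined by its first
coordinate. So if `p` is wandering, `p - ((p.1)_∅ / (w.1)_∅) w` lies both in and orthogonal to
`span ⋃ⱼ (R_j ⊕ R_j)G`, hence vanishes.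
-/

noncomputable section
open scoped ENNReal

namespace Smirnov

/-- Words in the letters `1,…,d`: the free monoid `𝔽⁺_d`. -/
abbrev Word (d : ℕ) := List (Fin d)

/-- The full Fock space `ℱ²_d = ℓ²(𝔽⁺_d)`. -/
abbrev Fock (d : ℕ) : Type := lp (fun _ : Word d => ℂ) 2

/-- The Cauchy product of formal free power series:
`(H·F)_α = ∑_{βγ=α} H_β F_γ`. -/
def cauchy {d : ℕ} (H F : Word d → ℂ) : Word d → ℂ :=
  fun α => ∑ i ∈ Finset.range (α.length + 1), H (List.take i α) * F (List.drop i α)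

/-- The standard basis formal power series `ξ_w`; `eWord []` is `ξ_∅`. -/
def eWord {d : ℕ} (w : Word d) : Word d → ℂ := fun α => if α = w then 1 else 0

/-- `H` is a bounded left multiplier of the Fock space: `H·F ∈ ℱ²_d` for every
`F ∈ ℱ²_d` and `F ↦ H·F` is bounded. -/
def IsBLM {d : ℕ} (H : Word d → ℂ) : Prop :=
  (∀ F : Fock d, Memℓp (cauchy H (F : Word d → ℂ)) 2) ∧
  (∃ C : ℝ, ∀ F G : Fock d, (G : Word d → ℂ) = cauchy H (F : Word d → ℂ) → ‖G‖ ≤ C * ‖F‖)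

/-- `A` is left outer: `A·ℱ²_d` is dense in `ℱ²_d`. -/
def IsLeftOuter {d : ℕ} (A : Word d → ℂ) : Prop :=
  Dense {G : Fock d | ∃ F : Fock d, (G : Word d → ℂ) = cauchy A (F : Word d → ℂ)}

/-- The domain `D_H = {F ∈ ℱ²_d : H·F ∈ ℱ²_d}` of left multiplication by `H`. -/
def domH {d : ℕ} (H : Word d → ℂ) : Set (Fock d) :=
  {F : Fock d | Memℓp (cauchy H (F : Word d → ℂ)) 2}

/-- The right creation operator `R_j` at the level of formal power series:
`R_j ξ_α = ξ_{αj}`. -/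
def rshift {d : ℕ} (j : Fin d) (F : Word d → ℂ) : Word d → ℂ :=
  fun β => if β.getLast? = some j then F β.dropLast else 0

/-- The backward shift `R_j*` at the level of formal power series. -/
def rshiftAdj {d : ℕ} (j : Fin d) (F : Word d → ℂ) : Word d → ℂ :=
  fun γ => F (γ ++ [j])

section ProductInner

variable {𝕜 E F : Type*} [RCLike 𝕜] [NormedAddCommGroup E] [InnerProductSpace 𝕜 E]
  [NormedAddCommGroup F] [InnerProductSpace 𝕜 F]

lemma inner_add_inner_eq_inner_toLp (p q : E × F) :
    inner 𝕜 p.1 q.1 + inner 𝕜 p.2 q.2 = inner 𝕜 (WithLp.toLp 2 p) (WithLp.toLp 2 q) := rfl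

lemma eq_zero_of_inner_add_inner_self_eq_zero {p : E × F}
    (h : inner 𝕜 p.1 p.1 + inner 𝕜 p.2 p.2 = 0) : p = 0 := by
  rw [inner_add_inner_eq_inner_toLp, inner_self_eq_zero] at h
  simpa using congrArg WithLp.ofLp h

lemma inner_add_inner_eq_zero_of_mem_span {S : Set (E × F)} {p q : E × F}
    (hp : ∀ s ∈ S, inner 𝕜 p.1 s.1 + inner 𝕜 p.2 s.2 = 0) (hq : q ∈ Submodule.span 𝕜 S) :
    inner 𝕜 p.1 q.1 + inner 𝕜 p.2 q.2 = 0 := by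
  induction hq using Submodule.span_induction with
  | mem s hs => exact hp s hs
  | zero => simp
  | add x y _ _ hx hy =>
    simp only [Prod.fst_add, Prod.snd_add, inner_add_right]
    linear_combination hx + hy
  | smul c x _ hx =>
    simp only [Prod.smul_fst, Prod.smul_snd, inner_smul_right]
    linear_combination c * hx

lemma exists_mem_forall_inner_add_inner_eq [CompleteSpace E] [CompleteSpace F]
    (G : Submodule 𝕜 (E × F)) (hG : IsClosed (G : Set (E × F))) (φ : E × F →L[𝕜] 𝕜) :
    ∃ w ∈ G, ∀ p ∈ G, inner 𝕜 w.1 p.1 + inner 𝕜 w.2 p.2 = φ p := by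
  let e := WithLp.prodContinuousLinearEquiv 2 𝕜 E F
  let G₂ := G.comap (e : WithLp 2 (E × F) →ₗ[𝕜] E × F)
  have : CompleteSpace G₂ := (hG.preimage e.continuous).completeSpace_coe
  let w₂ := (InnerProductSpace.toDual 𝕜 G₂).symm
    (φ ∘L (e : WithLp 2 (E × F) →L[𝕜] E × F) ∘L G₂.subtypeL)
  refine ⟨e w₂, w₂.2, fun p hp => ?_⟩
  have hp₂ : e.symm p ∈ G₂ := by simpa [G₂] using hp
  exact InnerProductSpace.toDual_symm_apply (x := (⟨e.symm p, hp₂⟩ : G₂))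

theorem setOf_mem_orthogonal_eq_smul_of_ker_le_span (G : Submodule 𝕜 (E × F)) {S : Set (E × F)}
    (hSG : S ⊆ G) (φ : E × F →ₗ[𝕜] 𝕜) (hφS : ∀ s ∈ S, φ s = 0)
    (hker : ∀ p ∈ G, φ p = 0 → p ∈ Submodule.span 𝕜 S) {w : E × F} (hwG : w ∈ G)
    (hw : ∀ p ∈ G, inner 𝕜 w.1 p.1 + inner 𝕜 w.2 p.2 = φ p) (hw0 : w ≠ 0) :
    {p | p ∈ G ∧ ∀ s ∈ S, inner 𝕜 p.1 s.1 + inner 𝕜 p.2 s.2 = 0} = {p | ∃ c : 𝕜, p = c • w} := by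
  have hwS (s) (hs : s ∈ S) : inner 𝕜 w.1 s.1 + inner 𝕜 w.2 s.2 = 0 :=
    (hw s (hSG hs)).trans (hφS s hs)
  have hφw : φ w ≠ 0 := fun h => hw0 (eq_zero_of_inner_add_inner_self_eq_zero ((hw w hwG).trans h))
  ext p
  constructor
  · rintro ⟨hpG, hpS⟩
    refine ⟨φ p / φ w, ?_⟩
    set p' := p - (φ p / φ w) • w
    have hp'S (s) (hs : s ∈ S) : inner 𝕜 p'.1 s.1 + inner 𝕜 p'.2 s.2 = 0 := by
      simp only [p', Prod.fst_sub, Prod.snd_sub, Prod.smul_fst, Prod.smul_snd, inner_sub_left,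
        inner_smul_left]
      linear_combination hpS s hs - starRingEnd 𝕜 (φ p / φ w) * hwS s hs
    have hp'span : p' ∈ Submodule.span 𝕜 S :=
      hker p' (G.sub_mem hpG (G.smul_mem _ hwG)) (by simp [p', hφw])
    exact sub_eq_zero.mp
      (eq_zero_of_inner_add_inner_self_eq_zero (inner_add_inner_eq_zero_of_mem_span hp'S hp'span))
  · rintro ⟨c, rfl⟩
    refine ⟨G.smul_mem c hwG, fun s hs => ?_⟩
    simp only [Prod.smul_fst, Prod.smul_snd, inner_smul_left]
    linear_combination starRingEnd 𝕜 c * hwS s hs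

end ProductInner

lemma eq_of_mem_of_fst_eq {R M N : Type*} [Ring R] [AddCommGroup M] [AddCommGroup N] [Module R M]
    [Module R N] {G : Submodule R (M × N)} (hgraph : ∀ y : N, ((0 : M), y) ∈ G → y = 0)
    {p q : M × N} (hp : p ∈ G) (hq : q ∈ G) (h : p.1 = q.1) : p = q := by
  have h₁ : (p - q).1 = 0 := sub_eq_zero.mpr h
  have hpq : ((0 : M), (p - q).2) ∈ G := h₁ ▸ G.sub_mem hp hq
  exact sub_eq_zero.mp (Prod.ext h₁ (hgraph _ hpq))

lemma exists_mem_apply_ne_zero_of_dense {𝕜 E F : Type*} [NormedField 𝕜] [NormedAddCommGroup E]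
    [NormedSpace 𝕜 E] [NormedAddCommGroup F] [NormedSpace 𝕜 F] {s : Set E} (hs : Dense s)
    {f : E →L[𝕜] F} (hf : f ≠ 0) : ∃ x ∈ s, f x ≠ 0 := by
  by_contra! h
  exact hf (ContinuousLinearMap.ext_on (hs.mono Submodule.subset_span) h)

section Shifts

variable {d : ℕ}

lemma rshift_append_singleton (j : Fin d) (F : Word d → ℂ) (γ : Word d) :
    rshift j F (γ ++ [j]) = F γ := by
  simp [rshift]

lemma rshift_nil (j : Fin d) (F : Word d → ℂ) : rshift j F [] = 0 := by
  simp [rshift]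

lemma rshift_eq_zero_of_notMem_range (j : Fin d) (F : Word d → ℂ) {β : Word d}
    (hβ : β ∉ Set.range (· ++ [j])) : rshift j F β = 0 := by
  rcases List.eq_nil_or_concat' β with rfl | ⟨γ, k, rfl⟩
  · exact rshift_nil j F
  · have hk : k ≠ j := by rintro rfl; exact hβ ⟨γ, rfl⟩
    simp [rshift, hk]

lemma append_singleton_injective (j : Fin d) : Function.Injective (· ++ [j] : Word d → Word d) :=
  fun _ _ h => List.append_cancel_right h

lemma memℓp_rshiftAdj (j : Fin d) (F : Fock d) : Memℓp (rshiftAdj j (F : Word d → ℂ)) 2 :=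
  memℓp_gen (((lp.memℓp F).summable (by norm_num)).comp_injective (append_singleton_injective j))

lemma memℓp_rshift (j : Fin d) (F : Fock d) : Memℓp (rshift j (F : Word d → ℂ)) 2 := by
  refine memℓp_gen ((Function.Injective.summable_iff (append_singleton_injective j)
    fun β hβ => by simp [rshift_eq_zero_of_notMem_range j _ hβ]).mp ?_)
  simpa [Function.comp_def, rshift_append_singleton] using
    (lp.memℓp F).summable (by norm_num : 0 < (2 : ℝ≥0∞).toReal)

def rshiftFock (j : Fin d) (F : Fock d) : Fock d := ⟨rshift j F, memℓp_rshift j F⟩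

def rshiftAdjFock (j : Fin d) (F : Fock d) : Fock d := ⟨rshiftAdj j F, memℓp_rshiftAdj j F⟩

lemma sum_rshift_rshiftAdj (F : Word d → ℂ) (hF : F [] = 0) :
    ∑ j, rshift j (rshiftAdj j F) = F := by
  funext α
  rw [Finset.sum_apply]
  rcases List.eq_nil_or_concat' α with rfl | ⟨β, k, rfl⟩
  · simp [rshift_nil, hF]
  · rw [Finset.sum_eq_single k (fun j _ hj => by simp [rshift, Ne.symm hj]) (by simp)]
    simp [rshift_append_singleton, rshiftAdj]

lemma sum_rshiftFock_rshiftAdjFock (F : Fock d) (hF : (F : Word d → ℂ) [] = 0) :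
    ∑ j, rshiftFock j (rshiftAdjFock j F) = F := by
  ext1
  rw [lp.coeFn_sum]
  exact sum_rshift_rshiftAdj F hF

end Shifts

section Graph

variable {d : ℕ}

/-- `⋃ⱼ (R_j ⊕ R_j) G`. -/
def shiftedGraph (G : Submodule ℂ (Fock d × Fock d)) : Set (Fock d × Fock d) :=
  {q' | ∃ q ∈ G, ∃ j : Fin d, (q'.1 : Word d → ℂ) = rshift j (q.1 : Word d → ℂ) ∧
    (q'.2 : Word d → ℂ) = rshift j (q.2 : Word d → ℂ)}

lemma mem_span_shiftedGraph {G : Submodule ℂ (Fock d × Fock d)}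
    (hgraph : ∀ y : Fock d, ((0 : Fock d), y) ∈ G → y = 0)
    (hshift : shiftedGraph G ⊆ G)
    (hlocal : ∀ p ∈ G, (p.1 : Word d → ℂ) [] = 0 → ∀ j : Fin d,
      ∀ x : Fock d, (x : Word d → ℂ) = rshiftAdj j (p.1 : Word d → ℂ) →
        ∃ y : Fock d, (x, y) ∈ G)
    {p : Fock d × Fock d} (hp : p ∈ G) (hp0 : (p.1 : Word d → ℂ) [] = 0) :
    p ∈ Submodule.span ℂ (shiftedGraph G) := by
  choose y hy using fun j => hlocal p hp hp0 j (rshiftAdjFock j p.1) rfl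
  let q : Fin d → Fock d × Fock d := fun j =>
    (rshiftFock j (rshiftAdjFock j p.1), rshiftFock j (y j))
  have hq : ∀ j, q j ∈ shiftedGraph G := fun j => ⟨_, hy j, j, rfl, rfl⟩
  have hpq : p = ∑ j, q j := by
    refine eq_of_mem_of_fst_eq hgraph hp (G.sum_mem fun j _ => hshift (hq j)) ?_
    rw [Prod.fst_sum, sum_rshiftFock_rshiftAdjFock p.1 hp0]
  rw [hpq]
  exact Submodule.sum_mem _ fun j _ => Submodule.subset_span (hq j)

end Graph

/-- `T` is encoded by its graph `G`; `w = Q*ξ_∅` appears as the Riesz vector of `p ↦ (p.1)_∅`. -/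
theorem statement9_general {d : ℕ}
    (G : Submodule ℂ (Fock d × Fock d))
    (hclosed : IsClosed (G : Set (Fock d × Fock d)))
    (hgraph : ∀ y : Fock d, ((0 : Fock d), y) ∈ G → y = 0)
    (hdense : Dense {x : Fock d | ∃ p ∈ G, Prod.fst p = x})
    (hshift : ∀ p ∈ G, ∀ j : Fin d, ∀ q : Fock d × Fock d,
      (q.1 : Word d → ℂ) = rshift j (p.1 : Word d → ℂ) →
      (q.2 : Word d → ℂ) = rshift j (p.2 : Word d → ℂ) → q ∈ G)
    (hlocal : ∀ p ∈ G, (p.1 : Word d → ℂ) ([] : Word d) = 0 → ∀ j : Fin d,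
      ∀ x : Fock d, (x : Word d → ℂ) = rshiftAdj j (p.1 : Word d → ℂ) →
        ∃ y : Fock d, (x, y) ∈ G) :
    ∃ w : Fock d × Fock d, w ∈ G ∧ w ≠ 0 ∧
      (∀ p ∈ G, (inner ℂ w.1 p.1 + inner ℂ w.2 p.2 : ℂ) = (p.1 : Word d → ℂ) ([] : Word d)) ∧
      {p : Fock d × Fock d | p ∈ G ∧ ∀ q ∈ G, ∀ j : Fin d, ∀ q' : Fock d × Fock d,
          (q'.1 : Word d → ℂ) = rshift j ((q : Fock d × Fock d).1 : Word d → ℂ) →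
          (q'.2 : Word d → ℂ) = rshift j ((q : Fock d × Fock d).2 : Word d → ℂ) →
          (inner ℂ p.1 q'.1 + inner ℂ p.2 q'.2 : ℂ) = 0}
        = {p : Fock d × Fock d | ∃ c : ℂ, p = c • w} := by
  let ev : Fock d →L[ℂ] ℂ := lp.evalCLM ℂ (fun _ : Word d => ℂ) 2 []
  let φ := ev ∘L ContinuousLinearMap.fst ℂ (Fock d) (Fock d)
  obtain ⟨w, hwG, hw⟩ := exists_mem_forall_inner_add_inner_eq G hclosed φ
  have hev : ev ≠ 0 := fun h => by
    simpa [ev, lp.evalCLM] using congrArg (· (lp.single 2 ([] : Word d) (1 : ℂ))) h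
  have hw0 : w ≠ 0 := by
    obtain ⟨_, ⟨p, hp, rfl⟩, hpx⟩ := exists_mem_apply_ne_zero_of_dense hdense hev
    rintro rfl
    exact hpx (by simpa [φ] using (hw p hp).symm)
  have hSG : shiftedGraph G ⊆ G := fun q' ⟨q, hq, j, h₁, h₂⟩ => hshift q hq j q' h₁ h₂
  have hφS (s) (hs : s ∈ shiftedGraph G) : φ s = 0 := by
    obtain ⟨q, -, j, h₁, -⟩ := hs
    simp [φ, ev, lp.evalCLM, h₁, rshift_nil]
  refine ⟨w, hwG, hw0, hw, ?_⟩
  convert setOf_mem_orthogonal_eq_smul_of_ker_le_span G hSG φ.toLinearMap hφS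
    (fun p hp hp0 => mem_span_shiftedGraph hgraph hSG hlocal hp hp0) hwG hw hw0 using 4
  simp only [shiftedGraph, Set.mem_ofPred_eq, forall_exists_index, and_imp]
  exact ⟨fun h s q hq j h₁ h₂ => h q hq j s h₁ h₂, fun h q hq j s h₁ h₂ => h s q hq j h₁ h₂⟩

/-- Let `T` be a closed, densely defined operator in `ℱ²_d`,
encoded by its graph `G`, a closed submodule of `ℱ²_d × ℱ²_d` which is the graph
of an operator (`(0,y) ∈ G → y = 0`) with dense domain (the set of first
components).  Assume `G` is invariant under `R_j ⊕ R_j` (i.e. `T` commutes with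
the right creation operators) and `T` is local (if `p ∈ G` and the coefficient
of `p.1` at the empty word vanishes, then `R_j* p.1` is again in the domain).
Then the wandering subspace `𝒲 = G ⊖ span ∪_j (R_j ⊕ R_j)G` is one-dimensional:
it is spanned by the nonzero vector `Q*ξ_∅`, where `Q(F ⊕ TF) = F`, i.e. the
unique `w ∈ G` with `⟪w, p⟫ = (p.1)_∅` for all `p ∈ G`.  (The inner product of
`ℱ²_d ⊕ ℱ²_d` is `⟪p, q⟫ = ⟪p.1, q.1⟫ + ⟪p.2, q.2⟫`, conjugate-linear in the
first argument.) -/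
theorem statement9 {d : ℕ} (hd : 0 < d)
    (G : Submodule ℂ (Fock d × Fock d))
    (hclosed : IsClosed (G : Set (Fock d × Fock d)))
    (hgraph : ∀ y : Fock d, ((0 : Fock d), y) ∈ G → y = 0)
    (hdense : Dense {x : Fock d | ∃ p ∈ G, Prod.fst p = x})
    (hshift : ∀ p ∈ G, ∀ j : Fin d, ∀ q : Fock d × Fock d,
      (q.1 : Word d → ℂ) = rshift j (p.1 : Word d → ℂ) →
      (q.2 : Word d → ℂ) = rshift j (p.2 : Word d → ℂ) → q ∈ G)
    (hlocal : ∀ p ∈ G, (p.1 : Word d → ℂ) ([] : Word d) = 0 → ∀ j : Fin d,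
      ∀ x : Fock d, (x : Word d → ℂ) = rshiftAdj j (p.1 : Word d → ℂ) →
        ∃ y : Fock d, (x, y) ∈ G) :
    ∃ w : Fock d × Fock d, w ∈ G ∧ w ≠ 0 ∧
      (∀ p ∈ G, (inner ℂ w.1 p.1 + inner ℂ w.2 p.2 : ℂ) = (p.1 : Word d → ℂ) ([] : Word d)) ∧
      {p : Fock d × Fock d | p ∈ G ∧ ∀ q ∈ G, ∀ j : Fin d, ∀ q' : Fock d × Fock d,
          (q'.1 : Word d → ℂ) = rshift j ((q : Fock d × Fock d).1 : Word d → ℂ) →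
          (q'.2 : Word d → ℂ) = rshift j ((q : Fock d × Fock d).2 : Word d → ℂ) →
          (inner ℂ p.1 q'.1 + inner ℂ p.2 q'.2 : ℂ) = 0}
        = {p : Fock d × Fock d | ∃ c : ℂ, p = c • w} :=
  statement9_general G hclosed hgraph hdense hshift hlocal

end Smirnov
end
end

section
/- Let H be a bounded left multiplier of ℱ²_d, and suppose C is a bounded left multiplier which is invertible, i.e. there is a bounded left multiplier C⁻¹ with C·C⁻¹ = C⁻¹·C = ξ_∅, and which satisfies ‖C·F‖² = ‖F‖² + ‖H·F‖² for all F ∈ ℱ²_d (equivalently M_C*M_C = I + M_H*M_H). Then A := C⁻¹ and B := H·A form the canonical pair for H: A is left outer, B = H·A, and the column (A,B) is an isometric multiplier, i.e. ‖A·F‖² + ‖B·F‖² = ‖F‖² for all F ∈ ℱ²_d. -/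
noncomputable section
open scoped ENNReal

namespace Smirnov

/-! The Cauchy product is associative with unit `ξ_∅`. Hence `C·C⁻¹ = ξ_∅` gives
`F = C·(C⁻¹·F)`, and the hypothesis on `C`, applied to `C⁻¹·F`, is exactly the isometry
of the column `(C⁻¹, H·C⁻¹)`. Since `C⁻¹·C = ξ_∅`, every `G ∈ ℱ²_d` equals `C⁻¹·(C·G)`,
so `C⁻¹` multiplies `ℱ²_d` onto itself and is outer. -/

lemma cauchy_eWord_nil_left {d : ℕ} (F : Word d → ℂ) : cauchy (eWord ([] : Word d)) F = F := by
  funext α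
  rw [cauchy, Finset.sum_eq_single 0]
  · simp [eWord]
  · intro i hi hi0
    have : α.take i ≠ [] := by
      simp only [ne_eq, List.take_eq_nil_iff, not_or]
      exact ⟨hi0, fun h => by simp [h] at hi; omega⟩
    simp [eWord, this]
  · simp

lemma cauchy_assoc {d : ℕ} (A B F : Word d → ℂ) :
    cauchy (cauchy A B) F = cauchy A (cauchy B F) := by
  funext α
  -- both sides are the sum over the splittings `α = β γ δ`, indexed by cut points `j ≤ i`
  set n := α.length
  have expand_left : ∀ i ∈ Finset.range (n + 1),
      cauchy A B (α.take i) * F (α.drop i) =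
        ∑ j ∈ Finset.range (i + 1), A (α.take j) * (B ((α.take i).drop j) * F (α.drop i)) := by
    intro i hi
    have hlen : (α.take i).length = i := List.length_take_of_le (by simpa [Nat.lt_succ_iff] using hi)
    rw [cauchy, hlen, Finset.sum_mul]
    refine Finset.sum_congr rfl fun j hj => ?_
    rw [List.take_take, min_eq_left (by simp at hj; omega), mul_assoc]
  rw [cauchy, Finset.sum_congr rfl expand_left, cauchy,
    Finset.sum_comm' (t' := Finset.range (n + 1)) (s' := fun j => Finset.Ico j (n + 1))
      (by intro i j; simp only [Finset.mem_range, Finset.mem_Ico]; omega)]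
  refine Finset.sum_congr rfl fun j hj => ?_
  simp only [Finset.mem_range] at hj
  rw [cauchy, List.length_drop, Finset.mul_sum, Finset.sum_Ico_eq_sum_range,
    show n + 1 - j = n - j + 1 by omega]
  refine Finset.sum_congr rfl fun k _ => ?_
  rw [List.drop_take, List.drop_drop, show j + k - j = k by omega]

lemma IsBLM.exists_bound_nonneg {d : ℕ} {A : Word d → ℂ} (hA : IsBLM A) :
    ∃ c, 0 ≤ c ∧ ∀ F G : Fock d, (G : Word d → ℂ) = cauchy A (F : Word d → ℂ) → ‖G‖ ≤ c * ‖F‖ := by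
  obtain ⟨c, hc⟩ := hA.2
  exact ⟨max c 0, le_max_right _ _, fun F G hG =>
    (hc F G hG).trans (mul_le_mul_of_nonneg_right (le_max_left _ _) (norm_nonneg _))⟩

lemma IsBLM.mul {d : ℕ} {A B : Word d → ℂ} (hA : IsBLM A) (hB : IsBLM B) :
    IsBLM (cauchy A B) := by
  let BF (F : Fock d) : Fock d := ⟨cauchy B F, hB.1 F⟩
  have hAB (F : Fock d) : cauchy (cauchy A B) F = cauchy A (BF F) := cauchy_assoc A B F
  refine ⟨fun F => hAB F ▸ hA.1 (BF F), ?_⟩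
  obtain ⟨cA, hcA, hA_bound⟩ := hA.exists_bound_nonneg
  obtain ⟨cB, -, hB_bound⟩ := hB.exists_bound_nonneg
  refine ⟨cA * cB, fun F G hG => ?_⟩
  calc ‖G‖ ≤ cA * ‖BF F‖ := hA_bound (BF F) G (hG.trans (hAB F))
    _ ≤ cA * (cB * ‖F‖) := by gcongr; exact hB_bound F (BF F) rfl
    _ = cA * cB * ‖F‖ := by ring

lemma isLeftOuter_of_cauchy_eq_eWord_nil {d : ℕ} {A C : Word d → ℂ}
    (hC : ∀ F : Fock d, Memℓp (cauchy C (F : Word d → ℂ)) 2)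
    (hAC : cauchy A C = eWord ([] : Word d)) : IsLeftOuter A := by
  have hrange : {G : Fock d | ∃ F : Fock d, (G : Word d → ℂ) = cauchy A (F : Word d → ℂ)} =
      Set.univ := by
    refine Set.eq_univ_of_forall fun G => ⟨⟨cauchy C G, hC G⟩, ?_⟩
    show (G : Word d → ℂ) = cauchy A (cauchy C G)
    rw [← cauchy_assoc, hAC, cauchy_eWord_nil_left]
  rw [IsLeftOuter, hrange]
  exact dense_univ

theorem statement17_general {d : ℕ} (H C Cinv : Word d → ℂ)
    (hH : IsBLM H) (hC : IsBLM C) (hCinv : IsBLM Cinv)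
    (hright : cauchy C Cinv = eWord ([] : Word d))
    (hleft : cauchy Cinv C = eWord ([] : Word d))
    (hnorm : ∀ (F GC GH : Fock d),
      (GC : Word d → ℂ) = cauchy C (F : Word d → ℂ) →
      (GH : Word d → ℂ) = cauchy H (F : Word d → ℂ) →
      ‖GC‖ ^ 2 = ‖F‖ ^ 2 + ‖GH‖ ^ 2) :
    IsLeftOuter Cinv ∧
    IsBLM (cauchy H Cinv) ∧
    (∀ (F GA GB : Fock d),
      (GA : Word d → ℂ) = cauchy Cinv (F : Word d → ℂ) →
      (GB : Word d → ℂ) = cauchy (cauchy H Cinv) (F : Word d → ℂ) →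
      ‖GA‖ ^ 2 + ‖GB‖ ^ 2 = ‖F‖ ^ 2) := by
  refine ⟨isLeftOuter_of_cauchy_eq_eWord_nil hC.1 hleft, hH.mul hCinv, ?_⟩
  intro F GA GB hGA hGB
  have hF : (F : Word d → ℂ) = cauchy C (GA : Word d → ℂ) := by
    rw [hGA, ← cauchy_assoc, hright, cauchy_eWord_nil_left]
  have hGB' : (GB : Word d → ℂ) = cauchy H (GA : Word d → ℂ) := by
    rw [hGB, cauchy_assoc, hGA]
  linarith [hnorm GA F GB hF hGB']

/-- Suppose `H` is a bounded left multiplier of `ℱ²_d` and `C`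
is a bounded left multiplier which is invertible (with bounded left multiplier
inverse `C⁻¹`, `C·C⁻¹ = C⁻¹·C = ξ_∅`) satisfying `‖C·F‖² = ‖F‖² + ‖H·F‖²` for
all `F ∈ ℱ²_d`.  Then `A := C⁻¹` and `B := H·A` form the canonical pair for
`H`: `A` is left outer, `B` is a bounded left multiplier, and the column
`(A,B)` is an isometric multiplier. -/
theorem statement17 {d : ℕ} (hd : 0 < d) (H C Cinv : Word d → ℂ)
    (hH : IsBLM H) (hC : IsBLM C) (hCinv : IsBLM Cinv)
    (hright : cauchy C Cinv = eWord ([] : Word d))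
    (hleft : cauchy Cinv C = eWord ([] : Word d))
    (hnorm : ∀ (F GC GH : Fock d),
      (GC : Word d → ℂ) = cauchy C (F : Word d → ℂ) →
      (GH : Word d → ℂ) = cauchy H (F : Word d → ℂ) →
      ‖GC‖ ^ 2 = ‖F‖ ^ 2 + ‖GH‖ ^ 2) :
    IsLeftOuter Cinv ∧
    IsBLM (cauchy H Cinv) ∧
    (∀ (F GA GB : Fock d),
      (GA : Word d → ℂ) = cauchy Cinv (F : Word d → ℂ) →
      (GB : Word d → ℂ) = cauchy (cauchy H Cinv) (F : Word d → ℂ) →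
      ‖GA‖ ^ 2 + ‖GB‖ ^ 2 = ‖F‖ ^ 2) :=
  statement17_general H C Cinv hH hC hCinv hright hleft hnorm

end Smirnov
end
end
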